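/- arXiv:2105.00919 — 7 statements merged into one kernel-verified Lean document; each statement's English description precedes it below -/
import Mathlib

section
/- Let n > 1 and i ≥ 0 be integers with n² − 5i² = 1. Set O = (0,0), M = (2n+5i)·(2,1), A = M + (1,−2), B = 4n·(2,1), C = M − (1,−2). Then A, B, C have integer coordinates, OABC is a kite with axis of symmetry OB (C is the reflection of A in the line OB, |OA| = |OC| and |AB| = |BC|), and OABC is equable: its area equals its perimeter. (This is family K2 of lattice equable kites.) -/
noncomputable section

/-- Euclidean distance between two points of `ℝ × ℝ`. -/
def dist2 (p q : ℝ × ℝ) : ℝ := Real.sqrt ((p.1 - q.1) ^ 2 + (p.2 - q.2) ^ 2)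

/-- Signed cross product of the vectors `q - p` and `r - p`. -/
def cross (p q r : ℝ × ℝ) : ℝ :=
  (q.1 - p.1) * (r.2 - p.2) - (q.2 - p.2) * (r.1 - p.1)

/-- Three points are collinear. -/
def Collinear3 (p q r : ℝ × ℝ) : Prop := cross p q r = 0

/-- Dot product on `ℝ × ℝ`. -/
def dot2 (p q : ℝ × ℝ) : ℝ := p.1 * q.1 + p.2 * q.2

/-- Closed segment between two points. -/
def Seg (p q : ℝ × ℝ) : Set (ℝ × ℝ) :=
  {x | ∃ t : ℝ, 0 ≤ t ∧ t ≤ 1 ∧ x = (1 - t) • p + t • q}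

/-- Twice the signed (shoelace) area of the quadrilateral `O A B C`. -/
def shoelace (O A B C : ℝ × ℝ) : ℝ :=
  (O.1 * A.2 - A.1 * O.2) + (A.1 * B.2 - B.1 * A.2) +
    (B.1 * C.2 - C.1 * B.2) + (C.1 * O.2 - O.1 * C.2)

/-- Area of the (simple) quadrilateral `O A B C`, by the shoelace formula. -/
def quadArea (O A B C : ℝ × ℝ) : ℝ := |shoelace O A B C| / 2

/-- Perimeter of the quadrilateral `O A B C`. -/
def quadPerim (O A B C : ℝ × ℝ) : ℝ :=
  dist2 O A + dist2 A B + dist2 B C + dist2 C O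

/-- Simple quadrilateral: no three vertices collinear, and the four closed sides
intersect only at shared endpoints. -/
def IsSimpleQuad (O A B C : ℝ × ℝ) : Prop :=
  ¬ Collinear3 O A B ∧ ¬ Collinear3 A B C ∧ ¬ Collinear3 B C O ∧ ¬ Collinear3 C O A ∧
  Seg O A ∩ Seg B C = ∅ ∧ Seg A B ∩ Seg C O = ∅ ∧
  Seg O A ∩ Seg A B = {A} ∧ Seg A B ∩ Seg B C = {B} ∧
  Seg B C ∩ Seg C O = {C} ∧ Seg C O ∩ Seg O A = {O}

/-- Quadrilateral `O A B C`: simple, with vertices in counterclockwise order. -/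
def IsQuad (O A B C : ℝ × ℝ) : Prop :=
  IsSimpleQuad O A B C ∧ 0 < shoelace O A B C

/-- A point of `ℝ × ℝ` with integer coordinates. -/
def IsLatticePt (p : ℝ × ℝ) : Prop := ∃ m n : ℤ, p = ((m : ℝ), (n : ℝ))

/-- An isometry of the Euclidean plane `ℝ × ℝ`. -/
def IsIsometry2 (f : ℝ × ℝ → ℝ × ℝ) : Prop :=
  Function.Bijective f ∧ ∀ p q, dist2 (f p) (f q) = dist2 p q

/-- The four vertices are in convex position: no vertex lies in the convex hull
of the other three. -/
def ConvexPos (O A B C : ℝ × ℝ) : Prop :=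
  O ∉ convexHull ℝ ({A, B, C} : Set (ℝ × ℝ)) ∧
  A ∉ convexHull ℝ ({O, B, C} : Set (ℝ × ℝ)) ∧
  B ∉ convexHull ℝ ({O, A, C} : Set (ℝ × ℝ)) ∧
  C ∉ convexHull ℝ ({O, A, B} : Set (ℝ × ℝ))

/-- The segment `pq` is parallel to the segment `rs`. -/
def Para (p q r s : ℝ × ℝ) : Prop :=
  (q.1 - p.1) * (s.2 - r.2) - (q.2 - p.2) * (s.1 - r.1) = 0

/-- Area of the triangle `p q r`. -/
def triArea (p q r : ℝ × ℝ) : ℝ := |cross p q r| / 2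

/-- Heron's formula: area of a triangle with side lengths `p`, `q`, `r`. -/
def heronArea (p q r : ℝ) : ℝ :=
  Real.sqrt ((p + q + r) * (-p + q + r) * (p - q + r) * (p + q - r)) / 4

end

lemma left_mem_Seg (p q : ℝ × ℝ) : p ∈ Seg p q := ⟨0, le_refl _, zero_le_one, by norm_num⟩
lemma right_mem_Seg (p q : ℝ × ℝ) : q ∈ Seg p q := ⟨1, zero_le_one, le_refl _, by norm_num⟩

lemma seg_adj (P Q R : ℝ × ℝ) (h : cross P Q R ≠ 0) : Seg P Q ∩ Seg Q R = {Q} := by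
  ext x
  simp only [Set.mem_inter_iff, Set.mem_singleton_iff]
  constructor
  · rintro ⟨⟨t, ht0, ht1, hx1⟩, ⟨r, hr0, hr1, hx2⟩⟩
    have e := hx1.symm.trans hx2
    have e1 : (1-t)*P.1 + t*Q.1 = (1-r)*Q.1 + r*R.1 := by
      have := congrArg Prod.fst e; simpa using this
    have e2 : (1-t)*P.2 + t*Q.2 = (1-r)*Q.2 + r*R.2 := by
      have := congrArg Prod.snd e; simpa using this
    have h0 : (1-t) * cross P Q R = 0 := by
      simp only [cross]; linear_combination (Q.2 - R.2) * e1 + (R.1 - Q.1) * e2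
    have ht : t = 1 := by
      rcases mul_eq_zero.1 h0 with h' | h'
      · linarith
      · exact absurd h' h
    have h0' : r * cross P Q R = 0 := by
      simp only [cross]; linear_combination (P.1 - Q.1) * e2 - (P.2 - Q.2) * e1
    have hr : r = 0 := by
      rcases mul_eq_zero.1 h0' with h' | h'
      · exact h'
      · exact absurd h' h
    rw [hx2, hr]; norm_num
  · rintro rfl; exact ⟨right_mem_Seg _ _, left_mem_Seg _ _⟩

lemma seg_disj (P Q R S : ℝ × ℝ) (h1 : 0 < cross P Q R) (h2 : 0 < cross P Q S) :
    Seg P Q ∩ Seg R S = ∅ := by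
  rw [Set.eq_empty_iff_forall_notMem]
  rintro x ⟨⟨t, ht0, ht1, hx1⟩, ⟨w, hw0, hw1, hx2⟩⟩
  have e1 : x.1 = (1-t)*P.1 + t*Q.1 := by
    have := congrArg Prod.fst hx1; simpa using this
  have e2 : x.2 = (1-t)*P.2 + t*Q.2 := by
    have := congrArg Prod.snd hx1; simpa using this
  have f1 : x.1 = (1-w)*R.1 + w*S.1 := by
    have := congrArg Prod.fst hx2; simpa using this
  have f2 : x.2 = (1-w)*R.2 + w*S.2 := by
    have := congrArg Prod.snd hx2; simpa using this
  have c0 : cross P Q x = 0 := by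
    simp only [cross]; linear_combination (Q.1 - P.1) * e2 - (Q.2 - P.2) * e1
  have cpos : cross P Q x = (1-w) * cross P Q R + w * cross P Q S := by
    simp only [cross]; linear_combination (Q.1 - P.1) * f2 - (Q.2 - P.2) * f1
  have hE : (1-w) * cross P Q R + w * cross P Q S = 0 := by rw [← cpos, c0]
  have hA : 0 ≤ w * cross P Q S := mul_nonneg hw0 h2.le
  have hB : 0 ≤ (1-w) * cross P Q R := mul_nonneg (by linarith) h1.le
  have hB0 : (1-w) * cross P Q R = 0 := by linarith
  have hA0 : w * cross P Q S = 0 := by linarith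
  rcases mul_eq_zero.1 hB0 with h' | h'
  · have hw : w = 1 := by linarith
    rw [hw, one_mul] at hA0; linarith
  · linarith

/-- Family K2 of lattice equable kites. -/
theorem K2_lattice_equable_kite (n i : ℤ) (hn : 1 < n) (hi : 0 ≤ i)
    (hpell : n ^ 2 - 5 * i ^ 2 = 1) :
    ∀ O M A B C : ℝ × ℝ,
      O = ((0 : ℝ), (0 : ℝ)) →
      M = (2 * (n : ℝ) + 5 * (i : ℝ)) • ((2 : ℝ), (1 : ℝ)) →
      A = M + ((1 : ℝ), (-2 : ℝ)) →
      B = (4 * (n : ℝ)) • ((2 : ℝ), (1 : ℝ)) →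
      C = M - ((1 : ℝ), (-2 : ℝ)) →
      IsLatticePt A ∧ IsLatticePt B ∧ IsLatticePt C ∧
      IsQuad O A B C ∧
      Collinear3 O B ((1 / 2 : ℝ) • (A + C)) ∧ dot2 (C - A) (B - O) = 0 ∧
      dist2 O A = dist2 O C ∧ dist2 A B = dist2 B C ∧
      quadArea O A B C = quadPerim O A B C := by
  intro O M A B C hO hM hA hB hC
  -- integer facts
  have hi1 : 1 ≤ i := by
    rcases lt_or_ge i 1 with h | h
    · have : i = 0 := by omega
      subst this; nlinarith
    · exact h
  have h2i : 2 * i < n := by nlinarith [sq_nonneg i]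
  have h25 : 2 * n < 5 * i := by nlinarith
  -- real facts
  have hp : (n : ℝ) ^ 2 - 5 * (i : ℝ) ^ 2 = 1 := by exact_mod_cast hpell
  have hN : (1 : ℝ) < (n : ℝ) := by exact_mod_cast hn
  have hI : (0 : ℝ) ≤ (i : ℝ) := by exact_mod_cast hi
  have h2iR : 2 * (i : ℝ) < (n : ℝ) := by exact_mod_cast h2i
  have h25R : 2 * (n : ℝ) < 5 * (i : ℝ) := by exact_mod_cast h25
  -- explicit coordinates
  have hA' : A = ((4*(n:ℝ)+10*(i:ℝ)+1 : ℝ), (2*(n:ℝ)+5*(i:ℝ)-2 : ℝ)) := by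
    rw [hA, hM]
    simp only [Prod.smul_mk, smul_eq_mul, Prod.mk_add_mk, Prod.mk.injEq]
    constructor <;> ring
  have hB' : B = ((8*(n:ℝ) : ℝ), (4*(n:ℝ) : ℝ)) := by
    rw [hB]
    simp only [Prod.smul_mk, smul_eq_mul, Prod.mk.injEq]
    constructor <;> ring
  have hC' : C = ((4*(n:ℝ)+10*(i:ℝ)-1 : ℝ), (2*(n:ℝ)+5*(i:ℝ)+2 : ℝ)) := by
    rw [hC, hM]
    simp only [Prod.smul_mk, smul_eq_mul, Prod.mk_sub_mk, Prod.mk.injEq]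
    constructor <;> ring
  subst hO
  rw [hA', hB', hC']
  set N := (n : ℝ)
  set I := (i : ℝ)
  set Ap : ℝ × ℝ := ((4*N+10*I+1 : ℝ), (2*N+5*I-2 : ℝ)) with hAp
  set Bp : ℝ × ℝ := ((8*N : ℝ), (4*N : ℝ)) with hBp
  set Cp : ℝ × ℝ := ((4*N+10*I-1 : ℝ), (2*N+5*I+2 : ℝ)) with hCp
  set Op : ℝ × ℝ := ((0 : ℝ), (0 : ℝ)) with hOp
  -- cross products
  have cOAB : cross Op Ap Bp = 20*N := by simp [cross, hAp, hBp, hOp]; ring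
  have cOAC : cross Op Ap Cp = 20*N + 50*I := by simp [cross, hAp, hCp, hOp]; ring
  have cABC : cross Ap Bp Cp = 20*N - 50*I := by simp [cross, hAp, hBp, hCp]; ring
  have cBCO : cross Bp Cp Op = 20*N := by simp [cross, hBp, hCp, hOp]; ring
  have cCOA : cross Cp Op Ap = 20*N + 50*I := by simp [cross, hCp, hOp, hAp]; ring
  have cCOB : cross Cp Op Bp = 20*N := by simp [cross, hCp, hOp, hBp]; ring
  have pOAB : 0 < cross Op Ap Bp := by rw [cOAB]; linarith
  have pOAC : 0 < cross Op Ap Cp := by rw [cOAC]; linarith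
  have pABC : cross Ap Bp Cp < 0 := by rw [cABC]; linarith
  have pBCO : 0 < cross Bp Cp Op := by rw [cBCO]; linarith
  have pCOA : 0 < cross Cp Op Ap := by rw [cCOA]; linarith
  have pCOB : 0 < cross Cp Op Bp := by rw [cCOB]; linarith
  -- distances
  have dOA : dist2 Op Ap = 5*N + 10*I := by
    have key : (Op.1 - Ap.1)^2 + (Op.2 - Ap.2)^2 = (5*N + 10*I)^2 := by
      simp [hOp, hAp]; linear_combination (-5 : ℝ) * hp
    rw [dist2, key]; exact Real.sqrt_sq (by linarith)
  have dOC : dist2 Op Cp = 5*N + 10*I := by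
    have key : (Op.1 - Cp.1)^2 + (Op.2 - Cp.2)^2 = (5*N + 10*I)^2 := by
      simp [hOp, hCp]; linear_combination (-5 : ℝ) * hp
    rw [dist2, key]; exact Real.sqrt_sq (by linarith)
  have dAB : dist2 Ap Bp = 5*N - 10*I := by
    have key : (Ap.1 - Bp.1)^2 + (Ap.2 - Bp.2)^2 = (5*N - 10*I)^2 := by
      simp [hAp, hBp]; linear_combination (-5 : ℝ) * hp
    rw [dist2, key]; exact Real.sqrt_sq (by linarith)
  have dBC : dist2 Bp Cp = 5*N - 10*I := by
    have key : (Bp.1 - Cp.1)^2 + (Bp.2 - Cp.2)^2 = (5*N - 10*I)^2 := by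
      simp [hBp, hCp]; linear_combination (-5 : ℝ) * hp
    rw [dist2, key]; exact Real.sqrt_sq (by linarith)
  have dCO : dist2 Cp Op = 5*N + 10*I := by
    have key : (Cp.1 - Op.1)^2 + (Cp.2 - Op.2)^2 = (5*N + 10*I)^2 := by
      simp [hOp, hCp]; linear_combination (-5 : ℝ) * hp
    rw [dist2, key]; exact Real.sqrt_sq (by linarith)
  have hsho : shoelace Op Ap Bp Cp = 40*N := by
    simp [shoelace, hOp, hAp, hBp, hCp]; ring
  refine ⟨?_, ?_, ?_, ⟨⟨?_, ?_, ?_, ?_, ?_, ?_, ?_, ?_, ?_, ?_⟩, ?_⟩, ?_, ?_, ?_, ?_, ?_⟩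
  · exact ⟨4*n+10*i+1, 2*n+5*i-2, by simp only [hAp, Prod.mk.injEq]; constructor <;> push_cast <;> ring⟩
  · exact ⟨8*n, 4*n, by simp only [hBp, Prod.mk.injEq]; constructor <;> push_cast <;> ring⟩
  · exact ⟨4*n+10*i-1, 2*n+5*i+2, by simp only [hCp, Prod.mk.injEq]; constructor <;> push_cast <;> ring⟩
  · exact fun h => absurd h (by rw [Collinear3, cOAB]; positivity)
  · exact fun h => by rw [Collinear3, cABC] at h; linarith
  · exact fun h => by rw [Collinear3, cBCO] at h; linarith
  · exact fun h => by rw [Collinear3, cCOA] at h; linarith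
  · exact seg_disj Op Ap Bp Cp pOAB pOAC
  · rw [Set.inter_comm]; exact seg_disj Cp Op Ap Bp pCOA pCOB
  · exact seg_adj Op Ap Bp (ne_of_gt pOAB)
  · exact seg_adj Ap Bp Cp (ne_of_lt pABC)
  · exact seg_adj Bp Cp Op (ne_of_gt pBCO)
  · exact seg_adj Cp Op Ap (ne_of_gt pCOA)
  · rw [hsho]; linarith
  · simp [Collinear3, cross, hOp, hAp, hBp, hCp]; ring
  · simp [dot2, hOp, hAp, hBp, hCp]; ring
  · rw [dOA, dOC]
  · rw [dAB, dBC]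
  · rw [quadArea, quadPerim, hsho, dOA, dAB, dBC, dCO, abs_of_pos (by linarith : (0:ℝ) < 40*N)]
    ring
end

section
/- Let n, i be nonnegative integers with n² − 2i² = 1. Set O = (0,0), M = (n+2i)·(2,2), A = M + (2,−2), B = 4n·(1,1), C = M − (2,−2). Then A, B, C have integer coordinates, OABC is a kite with axis of symmetry OB (C is the reflection of A in the line OB, |OA| = |OC| and |AB| = |BC|), and OABC is equable: its area equals its perimeter. (This is family K3 of lattice equable kites.) -/
section K3Helpers

private lemma seg_coord {p q x : ℝ × ℝ} (hx : x ∈ Seg p q) :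
    ∃ t : ℝ, 0 ≤ t ∧ t ≤ 1 ∧ x.1 = (1-t)*p.1 + t*q.1 ∧ x.2 = (1-t)*p.2 + t*q.2 := by
  obtain ⟨t, h0, h1, hxe⟩ := hx
  exact ⟨t, h0, h1, by rw [hxe]; simp, by rw [hxe]; simp⟩

private lemma seg_disj_s2 (a b c : ℝ) (p q r s : ℝ × ℝ)
    (hp : a*p.1+b*p.2+c = 0) (hq : a*q.1+b*q.2+c = 0)
    (hr : a*r.1+b*r.2+c < 0) (hs : a*s.1+b*s.2+c < 0) :
    Seg p q ∩ Seg r s = ∅ := by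
  ext x
  simp only [Set.mem_inter_iff, Set.mem_empty_iff_false, iff_false, not_and]
  intro h1 h2
  obtain ⟨t, ht0, ht1, hx1, hx2⟩ := seg_coord h1
  obtain ⟨u, hu0, hu1, hy1, hy2⟩ := seg_coord h2
  have e1 : a*x.1+b*x.2+c = 0 := by
    rw [hx1, hx2]; linear_combination (1-t)*hp + t*hq
  have e2 : a*x.1+b*x.2+c = (1-u)*(a*r.1+b*r.2+c) + u*(a*s.1+b*s.2+c) := by
    rw [hy1, hy2]; ring
  have h3 : (1-u)*(a*r.1+b*r.2+c) ≤ 0 :=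
    mul_nonpos_of_nonneg_of_nonpos (by linarith) hr.le
  have h4 : u*(a*s.1+b*s.2+c) ≤ 0 :=
    mul_nonpos_of_nonneg_of_nonpos hu0 hs.le
  have h5 : (1-u)*(a*r.1+b*r.2+c) = 0 := by linarith
  have h6 : u*(a*s.1+b*s.2+c) = 0 := by linarith
  rcases mul_eq_zero.mp h5 with h | h
  · rcases mul_eq_zero.mp h6 with h' | h'
    · linarith
    · linarith
  · linarith

private lemma seg_adj1 (a b c : ℝ) (p q r : ℝ × ℝ)
    (hp : a*p.1+b*p.2+c = 0) (hq : a*q.1+b*q.2+c = 0) (hr : a*r.1+b*r.2+c ≠ 0) :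
    Seg p q ∩ Seg q r = {q} := by
  ext x
  simp only [Set.mem_inter_iff, Set.mem_singleton_iff]
  constructor
  · rintro ⟨h1, h2⟩
    obtain ⟨t, ht0, ht1, hx1, hx2⟩ := seg_coord h1
    obtain ⟨u, hu0, hu1, hy1, hy2⟩ := seg_coord h2
    have e1 : a*x.1+b*x.2+c = 0 := by
      rw [hx1, hx2]; linear_combination (1-t)*hp + t*hq
    have e2 : a*x.1+b*x.2+c = u*(a*r.1+b*r.2+c) := by
      rw [hy1, hy2]; linear_combination (1-u)*hq
    have hu : u = 0 := by
      rcases mul_eq_zero.mp (e2 ▸ e1 : u*(a*r.1+b*r.2+c) = 0) with h | h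
      · exact h
      · exact absurd h hr
    exact Prod.ext_iff.mpr ⟨by rw [hy1, hu]; ring, by rw [hy2, hu]; ring⟩
  · rintro rfl
    exact ⟨⟨1, by norm_num, le_refl 1, by simp⟩, ⟨0, le_refl 0, by norm_num, by simp⟩⟩

private lemma seg_adj2 (a b c : ℝ) (p q r : ℝ × ℝ)
    (hq : a*q.1+b*q.2+c = 0) (hr : a*r.1+b*r.2+c = 0) (hp : a*p.1+b*p.2+c ≠ 0) :
    Seg p q ∩ Seg q r = {q} := by
  ext x
  simp only [Set.mem_inter_iff, Set.mem_singleton_iff]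
  constructor
  · rintro ⟨h1, h2⟩
    obtain ⟨t, ht0, ht1, hy1, hy2⟩ := seg_coord h1
    obtain ⟨u, hu0, hu1, hx1, hx2⟩ := seg_coord h2
    have e1 : a*x.1+b*x.2+c = 0 := by
      rw [hx1, hx2]; linear_combination (1-u)*hq + u*hr
    have e2 : a*x.1+b*x.2+c = (1-t)*(a*p.1+b*p.2+c) := by
      rw [hy1, hy2]; linear_combination t*hq
    have ht : t = 1 := by
      rcases mul_eq_zero.mp (e2 ▸ e1 : (1-t)*(a*p.1+b*p.2+c) = 0) with h | h
      · linarith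
      · exact absurd h hp
    exact Prod.ext_iff.mpr ⟨by rw [hy1, ht]; ring, by rw [hy2, ht]; ring⟩
  · rintro rfl
    exact ⟨⟨1, by norm_num, le_refl 1, by simp⟩, ⟨0, le_refl 0, by norm_num, by simp⟩⟩

end K3Helpers

/-- Family K3 of lattice equable kites. -/



theorem K3_lattice_equable_kite (n i : ℤ) (hn : 0 ≤ n) (hi : 0 ≤ i)
    (hpell : n ^ 2 - 2 * i ^ 2 = 1) :
    ∀ O M A B C : ℝ × ℝ,
      O = ((0 : ℝ), (0 : ℝ)) →
      M = ((n : ℝ) + 2 * (i : ℝ)) • ((2 : ℝ), (2 : ℝ)) →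
      A = M + ((2 : ℝ), (-2 : ℝ)) →
      B = (4 * (n : ℝ)) • ((1 : ℝ), (1 : ℝ)) →
      C = M - ((2 : ℝ), (-2 : ℝ)) →
      IsLatticePt A ∧ IsLatticePt B ∧ IsLatticePt C ∧
      IsQuad O A B C ∧
      Collinear3 O B ((1 / 2 : ℝ) • (A + C)) ∧ dot2 (C - A) (B - O) = 0 ∧
      dist2 O A = dist2 O C ∧ dist2 A B = dist2 B C ∧
      quadArea O A B C = quadPerim O A B C := by
  -- integer facts
  have hn1 : 1 ≤ n := by nlinarith [sq_nonneg i]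
  have hin : i < n := by nlinarith [sq_nonneg i]
  have hn2i : n ≠ 2*i := by
    intro h
    rw [h] at hpell
    have h2 : 2*i^2 = 1 := by ring_nf at hpell ⊢; linarith
    generalize i^2 = k at h2
    omega
  -- real facts
  have hp : (n:ℝ)^2 - 2*(i:ℝ)^2 = 1 := by exact_mod_cast hpell
  have hN1 : (1:ℝ) ≤ (n:ℝ) := by exact_mod_cast hn1
  have hI0 : (0:ℝ) ≤ (i:ℝ) := by exact_mod_cast hi
  have hIN : (i:ℝ) ≤ (n:ℝ) := by exact_mod_cast hin.le
  have hne : (n:ℝ) - 2*(i:ℝ) ≠ 0 := by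
    intro h
    exact hn2i (by exact_mod_cast (by linarith : (n:ℝ) = 2*(i:ℝ)))
  intro O M A B C hO hM hA hB hC
  subst hO hM hA hB hC
  have eA : (((n:ℝ) + 2 * (i:ℝ)) • ((2:ℝ), (2:ℝ)) + ((2:ℝ), (-2:ℝ)))
      = ((2*(n:ℝ)+4*(i:ℝ)+2 : ℝ), (2*(n:ℝ)+4*(i:ℝ)-2 : ℝ)) := by
    simp only [Prod.smul_mk, smul_eq_mul, Prod.mk_add_mk, Prod.mk.injEq]
    constructor <;> ring
  have eB : ((4 * (n:ℝ)) • ((1:ℝ), (1:ℝ)) : ℝ × ℝ) = ((4*(n:ℝ) : ℝ), (4*(n:ℝ) : ℝ)) := by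
    simp only [Prod.smul_mk, smul_eq_mul, Prod.mk.injEq]
    constructor <;> ring
  have eC : (((n:ℝ) + 2 * (i:ℝ)) • ((2:ℝ), (2:ℝ)) - ((2:ℝ), (-2:ℝ)))
      = ((2*(n:ℝ)+4*(i:ℝ)-2 : ℝ), (2*(n:ℝ)+4*(i:ℝ)+2 : ℝ)) := by
    simp only [Prod.smul_mk, smul_eq_mul, Prod.mk_sub_mk, Prod.mk.injEq]
    constructor <;> ring
  rw [eA, eB, eC]
  -- distance values
  have dOA : dist2 ((0:ℝ),(0:ℝ)) ((2*(n:ℝ)+4*(i:ℝ)+2 : ℝ), (2*(n:ℝ)+4*(i:ℝ)-2 : ℝ))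
      = 4*((n:ℝ)+(i:ℝ)) := by
    simp only [dist2]
    rw [show (((0:ℝ),(0:ℝ)).1 - ((2*(n:ℝ)+4*(i:ℝ)+2 : ℝ), (2*(n:ℝ)+4*(i:ℝ)-2 : ℝ)).1)^2 +
        (((0:ℝ),(0:ℝ)).2 - ((2*(n:ℝ)+4*(i:ℝ)+2 : ℝ), (2*(n:ℝ)+4*(i:ℝ)-2 : ℝ)).2)^2
        = (4*((n:ℝ)+(i:ℝ)))^2 from by simp only []; linear_combination (-8:ℝ)*hp]
    exact Real.sqrt_sq (by linarith)
  have dCO : dist2 ((2*(n:ℝ)+4*(i:ℝ)-2 : ℝ), (2*(n:ℝ)+4*(i:ℝ)+2 : ℝ)) ((0:ℝ),(0:ℝ))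
      = 4*((n:ℝ)+(i:ℝ)) := by
    simp only [dist2]
    rw [show ((((2*(n:ℝ)+4*(i:ℝ)-2 : ℝ), (2*(n:ℝ)+4*(i:ℝ)+2 : ℝ)).1 - ((0:ℝ),(0:ℝ)).1)^2 +
        (((2*(n:ℝ)+4*(i:ℝ)-2 : ℝ), (2*(n:ℝ)+4*(i:ℝ)+2 : ℝ)).2 - ((0:ℝ),(0:ℝ)).2)^2)
        = (4*((n:ℝ)+(i:ℝ)))^2 from by simp only []; linear_combination (-8:ℝ)*hp]
    exact Real.sqrt_sq (by linarith)
  have dAB : dist2 ((2*(n:ℝ)+4*(i:ℝ)+2 : ℝ), (2*(n:ℝ)+4*(i:ℝ)-2 : ℝ)) ((4*(n:ℝ) : ℝ), (4*(n:ℝ) : ℝ))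
      = 4*((n:ℝ)-(i:ℝ)) := by
    simp only [dist2]
    rw [show ((((2*(n:ℝ)+4*(i:ℝ)+2 : ℝ), (2*(n:ℝ)+4*(i:ℝ)-2 : ℝ)).1 - ((4*(n:ℝ):ℝ), (4*(n:ℝ):ℝ)).1)^2 +
        (((2*(n:ℝ)+4*(i:ℝ)+2 : ℝ), (2*(n:ℝ)+4*(i:ℝ)-2 : ℝ)).2 - ((4*(n:ℝ):ℝ), (4*(n:ℝ):ℝ)).2)^2)
        = (4*((n:ℝ)-(i:ℝ)))^2 from by simp only []; linear_combination (-8:ℝ)*hp]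
    exact Real.sqrt_sq (by linarith)
  have dBC : dist2 ((4*(n:ℝ) : ℝ), (4*(n:ℝ) : ℝ)) ((2*(n:ℝ)+4*(i:ℝ)-2 : ℝ), (2*(n:ℝ)+4*(i:ℝ)+2 : ℝ))
      = 4*((n:ℝ)-(i:ℝ)) := by
    simp only [dist2]
    rw [show ((((4*(n:ℝ):ℝ), (4*(n:ℝ):ℝ)).1 - ((2*(n:ℝ)+4*(i:ℝ)-2 : ℝ), (2*(n:ℝ)+4*(i:ℝ)+2 : ℝ)).1)^2 +
        (((4*(n:ℝ):ℝ), (4*(n:ℝ):ℝ)).2 - ((2*(n:ℝ)+4*(i:ℝ)-2 : ℝ), (2*(n:ℝ)+4*(i:ℝ)+2 : ℝ)).2)^2)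
        = (4*((n:ℝ)-(i:ℝ)))^2 from by simp only []; linear_combination (-8:ℝ)*hp]
    exact Real.sqrt_sq (by linarith)
  refine ⟨?_, ?_, ?_, ⟨⟨?_, ?_, ?_, ?_, ?_, ?_, ?_, ?_, ?_, ?_⟩, ?_⟩, ?_, ?_, ?_, ?_, ?_⟩
  -- lattice points
  · exact ⟨2*n+4*i+2, 2*n+4*i-2, by
      simp only [Prod.mk.injEq]; constructor <;> push_cast <;> ring⟩
  · exact ⟨4*n, 4*n, by
      simp only [Prod.mk.injEq]; constructor <;> push_cast <;> ring⟩
  · exact ⟨2*n+4*i-2, 2*n+4*i+2, by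
      simp only [Prod.mk.injEq]; constructor <;> push_cast <;> ring⟩
  -- noncollinearity
  · intro h
    simp only [Collinear3, cross] at h
    linarith
  · intro h
    simp only [Collinear3, cross] at h
    exact hne (by linarith)
  · intro h
    simp only [Collinear3, cross] at h
    linarith
  · intro h
    simp only [Collinear3, cross] at h
    linarith
  -- Seg O A ∩ Seg B C = ∅, via line OA
  · apply seg_disj_s2 ((n:ℝ)+2*(i:ℝ)-1) (-((n:ℝ)+2*(i:ℝ)+1)) 0
    · simp only []; ring
    · simp only []; ring
    · simp only []; nlinarith
    · simp only []; nlinarith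
  -- Seg A B ∩ Seg C O = ∅, via line CO
  · rw [Set.inter_comm]
    apply seg_disj_s2 (-((n:ℝ)+2*(i:ℝ)+1)) ((n:ℝ)+2*(i:ℝ)-1) 0
    · simp only []; ring
    · simp only []; ring
    · simp only []; nlinarith
    · simp only []; nlinarith
  -- Seg O A ∩ Seg A B = {A}, via line OA
  · apply seg_adj1 ((n:ℝ)+2*(i:ℝ)-1) (-((n:ℝ)+2*(i:ℝ)+1)) 0
    · simp only []; ring
    · simp only []; ring
    · simp only []
      intro h
      nlinarith
  -- Seg A B ∩ Seg B C = {B}, via line AB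
  · apply seg_adj1 (2*(n:ℝ)-4*(i:ℝ)+2) (-(2*(n:ℝ)-4*(i:ℝ)-2))
      (-((2*(n:ℝ)-4*(i:ℝ)+2)*(2*(n:ℝ)+4*(i:ℝ)+2) + (-(2*(n:ℝ)-4*(i:ℝ)-2))*(2*(n:ℝ)+4*(i:ℝ)-2)))
    · simp only []; ring
    · simp only []; ring
    · simp only []
      intro h
      exact hne (by linarith)
  -- Seg B C ∩ Seg C O = {C}, via line CO
  · apply seg_adj2 ((n:ℝ)+2*(i:ℝ)+1) (-((n:ℝ)+2*(i:ℝ)-1)) 0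
    · simp only []; ring
    · simp only []; ring
    · simp only []
      intro h
      nlinarith
  -- Seg C O ∩ Seg O A = {O}, via line OA
  · apply seg_adj2 ((n:ℝ)+2*(i:ℝ)-1) (-((n:ℝ)+2*(i:ℝ)+1)) 0
    · simp only []; ring
    · simp only []; ring
    · simp only []
      intro h
      nlinarith
  -- positive shoelace
  · simp only [shoelace]
    nlinarith
  -- kite axis collinearity
  · simp only [Collinear3, cross, Prod.mk_add_mk, Prod.smul_mk, smul_eq_mul]
    ring
  -- diagonal perpendicularity
  · simp only [dot2, Prod.mk_sub_mk]
    ring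
  -- |OA| = |OC|
  · simp only [dist2]
    congr 1
    ring
  -- |AB| = |BC|
  · simp only [dist2]
    congr 1
    ring
  -- equable
  · have hsl : shoelace ((0:ℝ),(0:ℝ)) ((2*(n:ℝ)+4*(i:ℝ)+2 : ℝ), (2*(n:ℝ)+4*(i:ℝ)-2 : ℝ))
        ((4*(n:ℝ) : ℝ), (4*(n:ℝ) : ℝ)) ((2*(n:ℝ)+4*(i:ℝ)-2 : ℝ), (2*(n:ℝ)+4*(i:ℝ)+2 : ℝ))
        = 32*(n:ℝ) := by
      simp only [shoelace]; ring
    simp only [quadArea, quadPerim, hsl, dOA, dAB, dBC, dCO]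
    rw [abs_of_pos (by linarith)]
    ring
end

section
/- In each of the four families of lattice equable kites, all members beyond the initial ones are darts (nonconvex kites). Precisely, with O = (0,0), A = M + v, B, C = M − v as in the families, the quadrilateral OABC is not convex in each of the following cases: K1 (M = ((n+5i)/2)(2,1), v = (2,−4), B = n(2,1)) with n² − 5i² = 4 and n > 2; K2 (M = (2n+5i)(2,1), v = (1,−2), B = 4n(2,1)) with n² − 5i² = 1 and n > 1; K3 (M = (n+2i)(2,2), v = (2,−2), B = 4n(1,1)) with n² − 2i² = 1 and n > 1; K4 (M = (4n+3i)(3/2,3/2), v = (3/2,−3/2), B = 12n(1,1)) with 2n² − i² = 1 and n > 1; where n, i are nonnegative integers. -/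
lemma hull_helper (O A C B : ℝ × ℝ) (t : ℝ) (h0 : 0 ≤ t) (h1 : t ≤ 1)
    (hB : B = t • ((1/2 : ℝ) • A + (1/2 : ℝ) • C) + (1 - t) • O) :
    B ∈ convexHull ℝ ({O, A, C} : Set (ℝ × ℝ)) := by
  have hO : O ∈ convexHull ℝ ({O, A, C} : Set (ℝ × ℝ)) :=
    subset_convexHull ℝ _ (by simp)
  have hA : A ∈ convexHull ℝ ({O, A, C} : Set (ℝ × ℝ)) :=
    subset_convexHull ℝ _ (by simp)
  have hC : C ∈ convexHull ℝ ({O, A, C} : Set (ℝ × ℝ)) :=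
    subset_convexHull ℝ _ (by simp)
  have hM : (1/2 : ℝ) • A + (1/2 : ℝ) • C ∈ convexHull ℝ ({O, A, C} : Set (ℝ × ℝ)) :=
    (convex_convexHull ℝ _) hA hC (a := 1/2) (b := 1/2) (by norm_num) (by norm_num) (by norm_num)
  have := (convex_convexHull ℝ _) hM hO (a := t) (b := 1 - t) h0 (by linarith) (by ring)
  rwa [hB]

/-- in each of the families K1–K4, all members beyond the initial
ones are darts (nonconvex kites). -/
theorem kite_families_are_darts :
    (∀ n i : ℤ, 0 ≤ n → 0 ≤ i → n ^ 2 - 5 * i ^ 2 = 4 → 2 < n →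
      ¬ ConvexPos ((0 : ℝ), (0 : ℝ))
        ((((n : ℝ) + 5 * (i : ℝ)) / 2) • ((2 : ℝ), (1 : ℝ)) + ((2 : ℝ), (-4 : ℝ)))
        ((n : ℝ) • ((2 : ℝ), (1 : ℝ)))
        ((((n : ℝ) + 5 * (i : ℝ)) / 2) • ((2 : ℝ), (1 : ℝ)) - ((2 : ℝ), (-4 : ℝ)))) ∧
    (∀ n i : ℤ, 0 ≤ n → 0 ≤ i → n ^ 2 - 5 * i ^ 2 = 1 → 1 < n →
      ¬ ConvexPos ((0 : ℝ), (0 : ℝ))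
        ((2 * (n : ℝ) + 5 * (i : ℝ)) • ((2 : ℝ), (1 : ℝ)) + ((1 : ℝ), (-2 : ℝ)))
        ((4 * (n : ℝ)) • ((2 : ℝ), (1 : ℝ)))
        ((2 * (n : ℝ) + 5 * (i : ℝ)) • ((2 : ℝ), (1 : ℝ)) - ((1 : ℝ), (-2 : ℝ)))) ∧
    (∀ n i : ℤ, 0 ≤ n → 0 ≤ i → n ^ 2 - 2 * i ^ 2 = 1 → 1 < n →
      ¬ ConvexPos ((0 : ℝ), (0 : ℝ))
        (((n : ℝ) + 2 * (i : ℝ)) • ((2 : ℝ), (2 : ℝ)) + ((2 : ℝ), (-2 : ℝ)))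
        ((4 * (n : ℝ)) • ((1 : ℝ), (1 : ℝ)))
        (((n : ℝ) + 2 * (i : ℝ)) • ((2 : ℝ), (2 : ℝ)) - ((2 : ℝ), (-2 : ℝ)))) ∧
    (∀ n i : ℤ, 0 ≤ n → 0 ≤ i → 2 * n ^ 2 - i ^ 2 = 1 → 1 < n →
      ¬ ConvexPos ((0 : ℝ), (0 : ℝ))
        ((4 * (n : ℝ) + 3 * (i : ℝ)) • ((3 / 2 : ℝ), (3 / 2 : ℝ)) + ((3 / 2 : ℝ), (-(3 / 2) : ℝ)))
        ((12 * (n : ℝ)) • ((1 : ℝ), (1 : ℝ)))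
        ((4 * (n : ℝ) + 3 * (i : ℝ)) • ((3 / 2 : ℝ), (3 / 2 : ℝ)) - ((3 / 2 : ℝ), (-(3 / 2) : ℝ)))) := by
  refine ⟨?_, ?_, ?_, ?_⟩
  · intro n i hn hi hpell hgt h
    have hi1 : 1 ≤ i := by nlinarith
    have hle : n ≤ 5 * i := by nlinarith
    have hd : (0 : ℝ) < (n : ℝ) + 5 * i := by
      have : (0:ℤ) < n + 5*i := by linarith
      push_cast; exact_mod_cast by exact_mod_cast this
    refine h.2.2.1 (hull_helper _ _ _ _ (2 * (n : ℝ) / ((n : ℝ) + 5 * i)) ?_ ?_ ?_)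
    · positivity
    · rw [div_le_one hd]
      have : (n : ℝ) ≤ 5 * i := by exact_mod_cast hle
      linarith
    · have hne : ((n : ℝ) + 5 * i) ≠ 0 := ne_of_gt hd
      simp only [Prod.smul_mk, Prod.mk_add_mk, Prod.mk_sub_mk, smul_eq_mul, Prod.mk.injEq]
      constructor <;> field_simp <;> ring
  · intro n i hn hi hpell hgt h
    have hi1 : 1 ≤ i := by nlinarith
    have hle : 4 * n ≤ 2 * n + 5 * i := by nlinarith
    have hd : (0 : ℝ) < 2 * (n : ℝ) + 5 * i := by
      have : (0:ℤ) < 2 * n + 5 * i := by linarith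
      push_cast; exact_mod_cast by exact_mod_cast this
    refine h.2.2.1 (hull_helper _ _ _ _ (4 * (n : ℝ) / (2 * (n : ℝ) + 5 * i)) ?_ ?_ ?_)
    · positivity
    · rw [div_le_one hd]
      have : (4 * n : ℝ) ≤ 2 * n + 5 * i := by exact_mod_cast hle
      linarith
    · have hne : (2 * (n : ℝ) + 5 * i) ≠ 0 := ne_of_gt hd
      simp only [Prod.smul_mk, Prod.mk_add_mk, Prod.mk_sub_mk, smul_eq_mul, Prod.mk.injEq]
      constructor <;> field_simp <;> ring
  · intro n i hn hi hpell hgt h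
    have hi1 : 1 ≤ i := by nlinarith
    have hle : 2 * n ≤ n + 2 * i := by nlinarith
    have hd : (0 : ℝ) < (n : ℝ) + 2 * i := by
      have : (0:ℤ) < n + 2 * i := by linarith
      push_cast; exact_mod_cast by exact_mod_cast this
    refine h.2.2.1 (hull_helper _ _ _ _ (2 * (n : ℝ) / ((n : ℝ) + 2 * i)) ?_ ?_ ?_)
    · positivity
    · rw [div_le_one hd]
      have : (2 * n : ℝ) ≤ n + 2 * i := by exact_mod_cast hle
      linarith
    · have hne : ((n : ℝ) + 2 * i) ≠ 0 := ne_of_gt hd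
      simp only [Prod.smul_mk, Prod.mk_add_mk, Prod.mk_sub_mk, smul_eq_mul, Prod.mk.injEq]
      constructor <;> field_simp <;> ring
  · intro n i hn hi hpell hgt h
    have hn3 : 3 ≤ n := by
      by_contra hc
      push_neg at hc
      interval_cases n <;>
        rcases lt_or_ge i 3 with hc2 | hc2 <;> nlinarith
    have hle : 8 * n ≤ 4 * n + 3 * i := by nlinarith
    have hd : (0 : ℝ) < 4 * (n : ℝ) + 3 * i := by
      have : (0:ℤ) < 4 * n + 3 * i := by nlinarith
      push_cast; exact_mod_cast by exact_mod_cast this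
    refine h.2.2.1 (hull_helper _ _ _ _ (8 * (n : ℝ) / (4 * (n : ℝ) + 3 * i)) ?_ ?_ ?_)
    · positivity
    · rw [div_le_one hd]
      have : (8 * n : ℝ) ≤ 4 * n + 3 * i := by exact_mod_cast hle
      linarith
    · have hne : (4 * (n : ℝ) + 3 * i) ≠ 0 := ne_of_gt hd
      simp only [Prod.smul_mk, Prod.mk_add_mk, Prod.mk_sub_mk, smul_eq_mul, Prod.mk.injEq]
      constructor <;> field_simp <;> ring
end

section
/- Let w, x, y, z be positive integers with w ≤ x ≤ y ≤ z, wxyz = (w+x+y+z)², and z < w+x+y. Then wxy ≥ 4(w+x+y), wxy² ≤ (w+x+2y)², 5 ≤ wx ≤ 16, and y ≤ 84. -/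
/-- bounds for solutions of the Diophantine equation from
Brahmagupta's formula for equable cyclic quadrilaterals. -/
theorem brahmagupta_diophantine_bounds (w x y z : ℤ)
    (hw : 0 < w) (hwx : w ≤ x) (hxy : x ≤ y) (hyz : y ≤ z)
    (heq : w * x * y * z = (w + x + y + z) ^ 2)
    (hlt : z < w + x + y) :
    4 * (w + x + y) ≤ w * x * y ∧
    w * x * y ^ 2 ≤ (w + x + 2 * y) ^ 2 ∧
    5 ≤ w * x ∧ w * x ≤ 16 ∧ y ≤ 84 := by
  have hx : 0 < x := lt_of_lt_of_le hw hwx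
  have hy : 0 < y := lt_of_lt_of_le hx hxy
  have hz : 0 < z := lt_of_lt_of_le hy hyz
  -- A
  have hA : 4 * (w + x + y) ≤ w * x * y := by
    nlinarith [sq_nonneg (w + x + y - z), mul_pos hw hx, mul_pos (mul_pos hw hx) hy]
  -- key for B: (z-y)*((w+x+y)^2 - y*z) ≥ 0
  have hkey : 0 ≤ (z - y) * ((w + x + y) ^ 2 - y * z) := by
    apply mul_nonneg (by linarith)
    nlinarith
  have hB : w * x * y ^ 2 ≤ (w + x + 2 * y) ^ 2 := by
    nlinarith [hkey, mul_pos hy hz]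
  have hC : 5 ≤ w * x := by nlinarith
  have hD : w * x ≤ 16 := by nlinarith
  refine ⟨hA, hB, hC, hD, ?_⟩
  by_contra h
  push_neg at h
  have h85 : 85 ≤ y := by linarith
  nlinarith [mul_nonneg (sub_nonneg.2 (show (1:ℤ) ≤ w from hw)) (sub_nonneg.2 (show (1:ℤ) ≤ x from lt_of_lt_of_le hw hwx)), hB, hC, mul_pos hw hx, sq_nonneg (w + x), sq_nonneg (w*x - 5)]
end

section
/- Let OABC be a quadrilateral whose area equals its perimeter, and suppose the diagonal OB is interior to the quadrilateral (A and C lie strictly on opposite sides of the line OB). Then |OB| > 4. -/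
lemma dist2_symm' (p q : ℝ × ℝ) : dist2 p q = dist2 q p := by
  unfold dist2; congr 1; ring

lemma cross_lt_key (O B A : ℝ × ℝ) (h : cross O B A ≠ 0) :
    2 * |cross O B A| < dist2 O B * (dist2 O A + dist2 A B) := by
  set d1 := (B.1-O.1)*(A.1-O.1)+(B.2-O.2)*(A.2-O.2) with hd1
  set d2 := (B.1-O.1)*(A.1-B.1)+(B.2-O.2)*(A.2-B.2) with hd2
  have lag1 : ((B.1-O.1)^2+(B.2-O.2)^2) * ((A.1-O.1)^2+(A.2-O.2)^2)
      = (cross O B A)^2 + d1^2 := by unfold cross; rw [hd1]; ring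
  have lag2 : ((B.1-O.1)^2+(B.2-O.2)^2) * ((A.1-B.1)^2+(A.2-B.2)^2)
      = (cross O B A)^2 + d2^2 := by unfold cross; rw [hd2]; ring
  have habs : |cross O B A| = Real.sqrt ((cross O B A)^2) := (Real.sqrt_sq_eq_abs _).symm
  have hm1 : dist2 O B * dist2 O A
      = Real.sqrt (((B.1-O.1)^2+(B.2-O.2)^2) * ((A.1-O.1)^2+(A.2-O.2)^2)) := by
    unfold dist2
    rw [← Real.sqrt_mul (by positivity)]
    congr 1; ring
  have hm2 : dist2 O B * dist2 A B
      = Real.sqrt (((B.1-O.1)^2+(B.2-O.2)^2) * ((A.1-B.1)^2+(A.2-B.2)^2)) := by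
    unfold dist2
    rw [← Real.sqrt_mul (by positivity)]
    congr 1; ring
  have le1 : |cross O B A| ≤ dist2 O B * dist2 O A := by
    rw [habs, hm1]; exact Real.sqrt_le_sqrt (by linarith [sq_nonneg d1])
  have le2 : |cross O B A| ≤ dist2 O B * dist2 A B := by
    rw [habs, hm2]; exact Real.sqrt_le_sqrt (by linarith [sq_nonneg d2])
  by_cases hzd1 : d1 = 0
  · have hzd2 : d2 ≠ 0 := by
      intro hz
      have hS : (B.1-O.1)^2+(B.2-O.2)^2 = 0 := by
        have : d1 - d2 = (B.1-O.1)^2+(B.2-O.2)^2 := by rw [hd1, hd2]; ring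
        rw [hzd1, hz] at this; linarith
      apply h
      have q1 : (B.1-O.1)^2 = 0 :=
        le_antisymm (by linarith [sq_nonneg (B.2-O.2)]) (sq_nonneg _)
      have q2 : (B.2-O.2)^2 = 0 :=
        le_antisymm (by linarith [sq_nonneg (B.1-O.1)]) (sq_nonneg _)
      have h1 : B.1 - O.1 = 0 := by
        have := sq_eq_zero_iff.mp q1; linarith
      have h2 : B.2 - O.2 = 0 := by
        have := sq_eq_zero_iff.mp q2; linarith
      unfold cross; rw [h1, h2]; ring
    have lt2 : |cross O B A| < dist2 O B * dist2 A B := by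
      rw [habs, hm2]
      have hp : 0 < d2^2 := by positivity
      exact Real.sqrt_lt_sqrt (sq_nonneg _) (by linarith)
    linarith
  · have lt1 : |cross O B A| < dist2 O B * dist2 O A := by
      rw [habs, hm1]
      have hp : 0 < d1^2 := by positivity
      exact Real.sqrt_lt_sqrt (sq_nonneg _) (by linarith)
    linarith


/-- an interior diagonal of an equable quadrilateral has length
greater than 4. -/
theorem interior_diagonal_gt_four (O A B C : ℝ × ℝ)
    (hquad : IsQuad O A B C)
    (hequable : quadArea O A B C = quadPerim O A B C)
    (hinterior : cross O B A * cross O B C < 0) :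
    4 < dist2 O B := by
  have hc1 : cross O B A ≠ 0 := by intro h; rw [h] at hinterior; simp at hinterior
  have hc2 : cross O B C ≠ 0 := by intro h; rw [h] at hinterior; simp at hinterior
  have hsh : shoelace O A B C = cross O B C - cross O B A := by
    unfold shoelace cross; ring
  have habs : |shoelace O A B C| = |cross O B A| + |cross O B C| := by
    rcases lt_or_gt_of_ne hc1 with h1 | h1
    · have h2 : 0 < cross O B C := by nlinarith
      rw [hsh, abs_of_pos (by linarith), abs_of_neg h1, abs_of_pos h2]; ring
    · have h2 : cross O B C < 0 := by nlinarith
      rw [hsh, abs_of_neg (by linarith), abs_of_pos h1, abs_of_neg h2]; ring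
  have k1 := cross_lt_key O B A hc1
  have k2 := cross_lt_key O B C hc2
  have e1 : dist2 O C = dist2 C O := dist2_symm' O C
  have e2 : dist2 C B = dist2 B C := dist2_symm' C B
  have hP : 0 < quadPerim O A B C := by
    rw [← hequable]
    unfold quadArea
    rw [habs]
    have := abs_pos.mpr hc1
    have := abs_pos.mpr hc2
    linarith
  have hA2 : |shoelace O A B C| = 2 * quadPerim O A B C := by
    have : quadArea O A B C = |shoelace O A B C| / 2 := rfl
    rw [hequable] at this; linarith
  unfold quadPerim at *
  rw [e1, e2] at k2
  nlinarith [hP, habs, hA2, k1, k2]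
end

section
/- Every cyclic quadrilateral with integer side lengths whose area equals its perimeter has, as its multiset of side lengths, one of exactly four possibilities: {14,6,5,5}, {8,5,5,2}, {6,6,3,3}, {4,4,4,4}. -/
theorem cross_rotate (p q r : ℝ × ℝ) : cross q r p = cross p q r := by
  simp only [cross]; ring

theorem dist2_sq (p q : ℝ × ℝ) : dist2 p q ^ 2 = (p.1 - q.1) ^ 2 + (p.2 - q.2) ^ 2 :=
  Real.sq_sqrt (by positivity)

theorem dist2_pos_of_not_collinear3 {p q r : ℝ × ℝ} (h : ¬ Collinear3 p q r) : 0 < dist2 p q := by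
  refine Real.sqrt_pos.2 (lt_of_le_of_ne (by positivity) fun h0 => h ?_)
  have h1 : q.1 - p.1 = 0 := by nlinarith [sq_nonneg (p.1 - q.1), sq_nonneg (p.2 - q.2)]
  have h2 : q.2 - p.2 = 0 := by nlinarith [sq_nonneg (p.1 - q.1), sq_nonneg (p.2 - q.2)]
  simp only [Collinear3, cross, h1, h2]; ring

theorem div_sub_mem_Icc_of_mul_neg {x y : ℝ} (h : x * y < 0) : x / (x - y) ∈ Set.Icc 0 1 := by
  rcases mul_neg_iff.1 h with ⟨hx, hy⟩ | ⟨hx, hy⟩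
  · exact ⟨div_nonneg hx.le (by linarith), (div_le_one (by linarith)).2 (by linarith)⟩
  · exact ⟨div_nonneg_of_nonpos hx.le (by linarith),
      (div_le_one_of_neg (by linarith)).2 (by linarith)⟩

theorem sub_ne_zero_of_mul_neg {x y : ℝ} (h : x * y < 0) : x - y ≠ 0 := by
  rw [sub_ne_zero]; rintro rfl; nlinarith [mul_self_nonneg x]

theorem mem_seg_of_mul_neg {p q : ℝ × ℝ} {x y : ℝ} (h : x * y < 0) :
    (x - y)⁻¹ • (x • q - y • p) ∈ Seg p q := by
  have hxy := sub_ne_zero_of_mul_neg h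
  obtain ⟨h0, h1⟩ := div_sub_mem_Icc_of_mul_neg h
  refine ⟨x / (x - y), h0, h1, ?_⟩
  ext <;> simp only [Prod.smul_fst, Prod.smul_snd, Prod.fst_sub, Prod.snd_sub, Prod.fst_add,
    Prod.snd_add, smul_eq_mul] <;> field_simp <;> ring

theorem seg_inter_seg_nonempty {p q u v : ℝ × ℝ} (hpq : cross p q u * cross p q v < 0)
    (huv : cross u v p * cross u v q < 0) : (Seg p q ∩ Seg u v).Nonempty := by
  refine ⟨_, mem_seg_of_mul_neg huv, ?_⟩
  convert mem_seg_of_mul_neg hpq using 1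
  have h₁ := sub_ne_zero_of_mul_neg huv
  have h₂ := sub_ne_zero_of_mul_neg hpq
  ext <;> simp only [Prod.smul_fst, Prod.smul_snd, Prod.fst_sub, Prod.snd_sub, smul_eq_mul] <;>
    field_simp <;> simp only [cross] <;> ring

theorem sq_dist2_of_smul_eq {P W X Y Z : ℝ × ℝ} {k₁ k₂ k₃ : ℝ}
    (hW : (k₁ + k₂ + k₃) • W = k₁ • X + k₂ • Y + k₃ • Z) :
    (k₁ + k₂ + k₃) ^ 2 * dist2 P W ^ 2 =
      (k₁ + k₂ + k₃) * (k₁ * dist2 P X ^ 2 + k₂ * dist2 P Y ^ 2 + k₃ * dist2 P Z ^ 2) -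
        (k₁ * k₂ * dist2 X Y ^ 2 + k₁ * k₃ * dist2 X Z ^ 2 + k₂ * k₃ * dist2 Y Z ^ 2) := by
  have h₁ := congrArg Prod.fst hW
  have h₂ := congrArg Prod.snd hW
  simp only [Prod.fst_add, Prod.snd_add, Prod.smul_fst, Prod.smul_snd, smul_eq_mul] at h₁ h₂
  simp only [dist2_sq]
  linear_combination
    ((k₁ + k₂ + k₃) * W.1 + (k₁ * X.1 + k₂ * Y.1 + k₃ * Z.1) - 2 * (k₁ + k₂ + k₃) * P.1) * h₁ +
      ((k₁ + k₂ + k₃) * W.2 + (k₁ * X.2 + k₂ * Y.2 + k₃ * Z.2) - 2 * (k₁ + k₂ + k₃) * P.2) * h₂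

theorem dist2_lt_of_smul_eq {P W X Y Z : ℝ × ℝ} {r k₁ k₂ k₃ : ℝ} (hk₁ : 0 < k₁) (hk₂ : 0 < k₂)
    (hk₃ : 0 < k₃) (hYZ : 0 < dist2 Y Z) (hW : (k₁ + k₂ + k₃) • W = k₁ • X + k₂ • Y + k₃ • Z)
    (hX : dist2 P X = r) (hY : dist2 P Y = r) (hZ : dist2 P Z = r) : dist2 P W < r := by
  have h := sq_dist2_of_smul_eq (P := P) hW
  rw [hX, hY, hZ] at h
  have hr : 0 ≤ r := hX ▸ Real.sqrt_nonneg _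
  have hW0 : 0 ≤ dist2 P W := Real.sqrt_nonneg _
  refine (pow_lt_pow_iff_left₀ hW0 hr two_ne_zero).1
    (lt_of_mul_lt_mul_left ?_ (sq_nonneg (k₁ + k₂ + k₃)))
  nlinarith [mul_pos (mul_pos hk₂ hk₃) (pow_pos hYZ 2),
    mul_nonneg (mul_pos hk₁ hk₂).le (sq_nonneg (dist2 X Y)),
    mul_nonneg (mul_pos hk₁ hk₃).le (sq_nonneg (dist2 X Z))]

theorem cross_pos_of_concyclic {O A B C P : ℝ × ℝ} {r : ℝ} (hOAB : ¬ Collinear3 O A B)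
    (hABC : ¬ Collinear3 A B C) (hCOA : ¬ Collinear3 C O A) (hOA_BC : Seg O A ∩ Seg B C = ∅)
    (hAB_CO : Seg A B ∩ Seg C O = ∅) (hS : 0 < shoelace O A B C) (hO : dist2 P O = r)
    (hA : dist2 P A = r) (hB : dist2 P B = r) (hC : dist2 P C = r) :
    0 < cross O A B := by
  have hsplit : shoelace O A B C = cross O A B + cross O B C := by
    simp only [shoelace, cross]; ring
  have hsplit' : shoelace O A B C = cross C O A + cross A B C := by
    simp only [shoelace, cross]; ring
  refine (lt_or_gt_of_ne hOAB).resolve_left fun hOAB_neg => ?_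
  have hOBC : 0 < cross O B C := by linarith
  rcases lt_or_gt_of_ne hCOA with hx | hx <;> rcases lt_or_gt_of_ne hABC with hy | hy
  · linarith
  · refine (seg_inter_seg_nonempty (p := A) (q := B) (u := C) (v := O) ?_ ?_).ne_empty hAB_CO
    · rw [cross_rotate O A B]; exact mul_neg_of_pos_of_neg hy hOAB_neg
    · rw [cross_rotate B C O, cross_rotate O B C]; exact mul_neg_of_neg_of_pos hx hOBC
  · refine (seg_inter_seg_nonempty (p := O) (q := A) (u := B) (v := C) ?_ ?_).ne_empty hOA_BC
    · rw [cross_rotate C O A]; exact mul_neg_of_neg_of_pos hOAB_neg hx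
    · rw [cross_rotate O B C, cross_rotate A B C]; exact mul_neg_of_pos_of_neg hOBC hy
  · -- `A` lies strictly inside the triangle `OBC`, hence strictly inside its circumcircle.
    have hBC : 0 < dist2 B C :=
      dist2_pos_of_not_collinear3 (r := A) (by rwa [Collinear3, cross_rotate])
    have hA' : (cross A B C + cross C O A + -cross O A B) • A =
        cross A B C • O + cross C O A • B + -cross O A B • C := by
      ext <;> simp only [Prod.smul_fst, Prod.smul_snd, Prod.fst_add, Prod.snd_add, smul_eq_mul,
        cross] <;> ring
    exact (dist2_lt_of_smul_eq hy hx (neg_pos.2 hOAB_neg) hBC hA' hO hB hC).ne hA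

theorem dot_mul_cross_add_dot_mul_cross_eq_zero {O A B C P : ℝ × ℝ} {r : ℝ}
    (hO : dist2 P O = r) (hA : dist2 P A = r) (hB : dist2 P B = r) (hC : dist2 P C = r) :
    dot2 (O - A) (B - A) * cross O B C + dot2 (O - C) (B - C) * cross O A B = 0 := by
  have hsq : ∀ {X}, dist2 P X = r → (P.1 - X.1) ^ 2 + (P.2 - X.2) ^ 2 = r ^ 2 := fun h => by
    rw [← dist2_sq, h]
  -- Up to sign, the left side is the determinant `det [xᵢ, yᵢ, xᵢ ^ 2 + yᵢ ^ 2, 1]` of the four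
  -- points, whose cofactors along the third column are the four signed areas.
  linear_combination (norm := skip) cross O B C * hsq hA + cross O A B * hsq hC +
    - cross A B C * hsq hO - cross O A C * hsq hB
  simp only [dot2, cross, Prod.fst_sub, Prod.snd_sub]
  ring

theorem brahmagupta {O A B C P : ℝ × ℝ} {r : ℝ} (hO : dist2 P O = r) (hA : dist2 P A = r)
    (hB : dist2 P B = r) (hC : dist2 P C = r) (hOAB : 0 < cross O A B) (hOBC : 0 < cross O B C) :
    16 * quadArea O A B C ^ 2 =
      (-dist2 O A + dist2 A B + dist2 B C + dist2 C O) *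
        (dist2 O A - dist2 A B + dist2 B C + dist2 C O) *
        (dist2 O A + dist2 A B - dist2 B C + dist2 C O) *
        (dist2 O A + dist2 A B + dist2 B C - dist2 C O) := by
  have hK : quadArea O A B C = (cross O A B + cross O B C) / 2 := by
    rw [quadArea, show shoelace O A B C = cross O A B + cross O B C by
      simp only [shoelace, cross]; ring, abs_of_pos (by linarith)]
  set a := dist2 O A
  set b := dist2 A B
  set c := dist2 B C
  set d := dist2 C O
  have ha : 0 ≤ a := Real.sqrt_nonneg _
  have hb : 0 ≤ b := Real.sqrt_nonneg _
  have hc : 0 ≤ c := Real.sqrt_nonneg _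
  have hd : 0 ≤ d := Real.sqrt_nonneg _
  -- With `A`, `C` the angles at those vertices, `u = ab cos A`, `cross O A B = ab sin A`,
  -- `v = cd cos C`, `cross O B C = cd sin C`.
  set u := dot2 (O - A) (B - A)
  set v := dot2 (O - C) (B - C)
  have hab : (a * b) ^ 2 = cross O A B ^ 2 + u ^ 2 := by
    simp only [a, b, u, mul_pow, dist2_sq, dot2, cross, Prod.fst_sub, Prod.snd_sub]; ring
  have hcd : (c * d) ^ 2 = cross O B C ^ 2 + v ^ 2 := by
    simp only [c, d, v, mul_pow, dist2_sq, dot2, cross, Prod.fst_sub, Prod.snd_sub]; ring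
  -- The law of cosines for the diagonal `OB`, in the triangles `OAB` and `OBC`.
  have hOB : a ^ 2 + b ^ 2 - c ^ 2 - d ^ 2 = 2 * (u - v) := by
    simp only [a, b, c, d, u, v, dist2_sq, dot2, Prod.fst_sub, Prod.snd_sub]; ring
  have hsin : u * cross O B C + v * cross O A B = 0 :=
    dot_mul_cross_add_dot_mul_cross_eq_zero hO hA hB hC
  -- `sin (A + C) = 0` with `sin A, sin C > 0` forces `A + C = π`.
  have hcos : cross O A B * cross O B C - u * v = a * b * (c * d) := by
    have huv : u * v ≤ 0 := by
      have : cross O A B * cross O B C * (u * v) = -(v * cross O A B) ^ 2 := by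
        linear_combination (v * cross O A B) * hsin
      nlinarith [mul_pos hOAB hOBC, sq_nonneg (v * cross O A B)]
    refine (pow_left_inj₀ (by nlinarith [mul_pos hOAB hOBC])
      (mul_nonneg (mul_nonneg ha hb) (mul_nonneg hc hd)) two_ne_zero).1 ?_
    linear_combination (-(u * cross O B C + v * cross O A B)) * hsin - (c * d) ^ 2 * hab -
      (cross O A B ^ 2 + u ^ 2) * hcd
  rw [hK]
  linear_combination
    (a ^ 2 + b ^ 2 - c ^ 2 - d ^ 2 + 2 * (u - v)) * hOB - 4 * hab - 4 * hcd + 8 * hcos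

theorem eq_of_mul_eq_sum_sq {k₁ k₂ k₃ k₄ : ℤ} (h₁ : 1 ≤ k₁) (h₁₂ : k₁ ≤ k₂) (h₂₃ : k₂ ≤ k₃)
    (h₃₄ : k₃ ≤ k₄) (h₄ : k₄ ≤ k₁ + k₂ + k₃ - 2)
    (h : k₁ * k₂ * k₃ * k₄ = (k₁ + k₂ + k₃ + k₄) ^ 2) :
    (k₁ = 1 ∧ k₂ = 9 ∧ k₃ = 10 ∧ k₄ = 10) ∨ (k₁ = 2 ∧ k₂ = 5 ∧ k₃ = 5 ∧ k₄ = 8) ∨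
      (k₁ = 3 ∧ k₂ = 3 ∧ k₃ = 6 ∧ k₄ = 6) ∨ (k₁ = 4 ∧ k₂ = 4 ∧ k₃ = 4 ∧ k₄ = 4) := by
  set σ := k₁ + k₂ + k₃ with hσ
  -- `k₄` and its Vieta partner `q` are the roots of `X ^ 2 - (k₁ k₂ k₃ - 2 σ) X + σ ^ 2`.
  obtain ⟨q, hq_mul, hq_add⟩ : ∃ q, k₄ * q = σ ^ 2 ∧ k₄ + q = k₁ * k₂ * k₃ - 2 * σ :=
    ⟨k₁ * k₂ * k₃ - 2 * σ - k₄, by linear_combination h, by ring⟩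
  have hσq : σ < q := by nlinarith
  have hlow : 4 * σ < k₁ * k₂ * k₃ := by
    nlinarith [mul_pos (by linarith : 0 < q - k₄) (by linarith : 0 < q - k₄)]
  have hup : 3 * (k₁ * k₂ * k₃) ≤ 16 * σ := by
    nlinarith [mul_nonneg (by linarith : 0 ≤ 3 * k₄ - σ) (by linarith : 0 ≤ 3 * σ - k₄)]
  have hk₃ : k₁ * k₂ * k₃ * k₃ ≤ (σ + k₃) ^ 2 := by
    nlinarith [mul_nonneg (by linarith : 0 ≤ k₄ - k₃) (by linarith : 0 ≤ q - k₃)]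
  have hm : 5 ≤ k₁ * k₂ ∧ k₁ * k₂ ≤ 16 := by constructor <;> nlinarith
  have hk₁ : k₁ ≤ 4 := by nlinarith
  have hk₂ : k₂ ≤ 16 := by nlinarith
  clear_value σ
  subst hσ
  clear hq_mul hq_add hσq hup
  interval_cases k₁ <;> interval_cases k₂ <;> try omega
  all_goals
    have hk₃_le : k₃ ≤ 25 := by nlinarith
    interval_cases k₃ <;> first | omega | (interval_cases k₄ <;> omega)

theorem even_add_of_brahmagupta_eq {a b c d : ℤ}
    (h : (-a + b + c + d) * (a - b + c + d) * (a + b - c + d) * (a + b + c - d) =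
      16 * (a + b + c + d) ^ 2) :
    Even (a + b + c + d) := by
  have := congrArg Even h
  simp only [Int.even_mul, Int.even_add, even_neg, Int.even_sub, or_self, Int.even_pow, ne_eq,
    OfNat.ofNat_ne_zero, not_false_eq_true, and_true, eq_iff_iff, iff_or_self] at this ⊢
  tauto

theorem eq_of_brahmagupta_eq_of_le {a b c d : ℤ} (ha : 1 ≤ a) (hab : a ≤ b) (hbc : b ≤ c)
    (hcd : c ≤ d)
    (h : (-a + b + c + d) * (a - b + c + d) * (a + b - c + d) * (a + b + c - d) =
      16 * (a + b + c + d) ^ 2) :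
    (a = 5 ∧ b = 5 ∧ c = 6 ∧ d = 14) ∨ (a = 2 ∧ b = 5 ∧ c = 5 ∧ d = 8) ∨
      (a = 3 ∧ b = 3 ∧ c = 6 ∧ d = 6) ∨ (a = 4 ∧ b = 4 ∧ c = 4 ∧ d = 4) := by
  obtain ⟨s, hs⟩ := even_add_of_brahmagupta_eq h
  have hk : (s - d) * (s - c) * (s - b) * (s - a) =
      ((s - d) + (s - c) + (s - b) + (s - a)) ^ 2 := by
    obtain rfl : d = s + s - a - b - c := by omega
    refine mul_left_cancel₀ (by norm_num : (16 : ℤ) ≠ 0) ?_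
    linear_combination h
  have hd : 0 < s - d := by
    have hcba : 0 < (s - c) * (s - b) * (s - a) :=
      mul_pos (mul_pos (by omega) (by omega)) (by omega)
    refine pos_of_mul_pos_left ?_ hcba.le
    rw [← mul_assoc, ← mul_assoc, hk]
    exact pow_pos (by omega) 2
  rcases eq_of_mul_eq_sum_sq (by omega) (by omega) (by omega) (by omega) (by omega) hk with
    h | h | h | h <;> omega

theorem multiset_eq_of_brahmagupta_eq {a b c d : ℤ} (ha : 1 ≤ a) (hb : 1 ≤ b) (hc : 1 ≤ c)
    (hd : 1 ≤ d)
    (h : (-a + b + c + d) * (a - b + c + d) * (a + b - c + d) * (a + b + c - d) =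
      16 * (a + b + c + d) ^ 2) :
    ({a, b, c, d} : Multiset ℤ) = {14, 6, 5, 5} ∨ ({a, b, c, d} : Multiset ℤ) = {8, 5, 5, 2} ∨
      ({a, b, c, d} : Multiset ℤ) = {6, 6, 3, 3} ∨ ({a, b, c, d} : Multiset ℤ) = {4, 4, 4, 4} := by
  set m : Multiset ℤ := {a, b, c, d} with hm_def
  have hm : (∀ t ∈ m, 1 ≤ t) ∧ (m.map fun t => m.sum - 2 * t).prod = 16 * m.sum ^ 2 := by
    simp only [hm_def, Multiset.insert_eq_cons, Multiset.mem_cons, Multiset.mem_singleton,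
      Multiset.map_cons, Multiset.map_singleton, Multiset.prod_cons, Multiset.prod_singleton,
      Multiset.sum_cons, Multiset.sum_singleton]
    refine ⟨by rintro t (rfl | rfl | rfl | rfl) <;> assumption, ?_⟩
    linear_combination h
  obtain ⟨l, hl_sorted, hl⟩ : ∃ l : List ℤ, l.Pairwise (· ≤ ·) ∧ (l : Multiset ℤ) = m :=
    ⟨m.sort (· ≤ ·), m.pairwise_sort _, m.sort_eq _⟩
  obtain ⟨w, x, y, z, rfl⟩ : ∃ w x y z, l = [w, x, y, z] := by
    match l, congrArg Multiset.card hl with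
    | [w, x, y, z], _ => exact ⟨w, x, y, z, rfl⟩
  rw [← hl] at hm ⊢
  simp only [List.pairwise_cons, List.mem_cons, List.not_mem_nil, or_false, forall_eq_or_imp,
    forall_eq, IsEmpty.forall_iff, implies_true, List.Pairwise.nil, and_self, and_true,
    Multiset.mem_coe, Multiset.sum_coe, List.sum_cons, List.sum_nil, add_zero, Multiset.map_coe,
    List.map_cons, List.map_nil, Multiset.prod_coe, List.prod_cons, List.prod_nil, mul_one]
    at hl_sorted hm
  obtain ⟨⟨hw, -, -, -⟩, heq⟩ := hm
  rcases eq_of_brahmagupta_eq_of_le hw hl_sorted.1.1 hl_sorted.2.1.1 hl_sorted.2.2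
    (by linear_combination heq) with
    ⟨rfl, rfl, rfl, rfl⟩ | ⟨rfl, rfl, rfl, rfl⟩ | ⟨rfl, rfl, rfl, rfl⟩ | ⟨rfl, rfl, rfl, rfl⟩ <;>
    decide

/-- the multiset of side lengths of an equable cyclic
quadrilateral with integer sides is one of exactly four possibilities. -/
theorem equable_cyclic_side_lengths (O A B C : ℝ × ℝ)
    (hquad : IsQuad O A B C)
    (hcyclic : ∃ (P : ℝ × ℝ) (r : ℝ),
      dist2 P O = r ∧ dist2 P A = r ∧ dist2 P B = r ∧ dist2 P C = r)
    (hsides : ∃ a b c d : ℤ,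
      dist2 O A = (a : ℝ) ∧ dist2 A B = (b : ℝ) ∧ dist2 B C = (c : ℝ) ∧ dist2 C O = (d : ℝ))
    (hequable : quadArea O A B C = quadPerim O A B C) :
    ({dist2 O A, dist2 A B, dist2 B C, dist2 C O} : Multiset ℝ) =
        ({14, 6, 5, 5} : Multiset ℝ) ∨
    ({dist2 O A, dist2 A B, dist2 B C, dist2 C O} : Multiset ℝ) =
        ({8, 5, 5, 2} : Multiset ℝ) ∨
    ({dist2 O A, dist2 A B, dist2 B C, dist2 C O} : Multiset ℝ) =
        ({6, 6, 3, 3} : Multiset ℝ) ∨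
    ({dist2 O A, dist2 A B, dist2 B C, dist2 C O} : Multiset ℝ) =
        ({4, 4, 4, 4} : Multiset ℝ) := by
  obtain ⟨⟨hOAB, hABC, hBCO, hCOA, hOA_BC, hAB_CO, -, -, -, -⟩, hS⟩ := hquad
  obtain ⟨P, r, hPO, hPA, hPB, hPC⟩ := hcyclic
  obtain ⟨a, b, c, d, ha, hb, hc, hd⟩ := hsides
  have hOAB_pos : 0 < cross O A B :=
    cross_pos_of_concyclic hOAB hABC hCOA hOA_BC hAB_CO hS hPO hPA hPB hPC
  have hOBC_pos : 0 < cross O B C := by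
    rw [← cross_rotate]
    refine cross_pos_of_concyclic hBCO hCOA hABC (by rwa [Set.inter_comm])
      (by rwa [Set.inter_comm]) ?_ hPB hPC hPO hPA
    convert hS using 1; simp only [shoelace]; ring
  have hsides_eq := brahmagupta hPO hPA hPB hPC hOAB_pos hOBC_pos
  rw [hequable, quadPerim, ha, hb, hc, hd] at hsides_eq
  have hone : ∀ {p q s : ℝ × ℝ} {n : ℤ}, ¬ Collinear3 p q s → dist2 p q = n → 1 ≤ n :=
    fun h hn => by exact_mod_cast hn ▸ dist2_pos_of_not_collinear3 h
  have hcast : ({(a : ℝ), (b : ℝ), (c : ℝ), (d : ℝ)} : Multiset ℝ) =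
      ({a, b, c, d} : Multiset ℤ).map (↑) := by
    simp
  rw [ha, hb, hc, hd, hcast]
  rcases multiset_eq_of_brahmagupta_eq (hone hOAB ha) (hone hABC hb) (hone hBCO hc)
    (hone hCOA hd) (by exact_mod_cast hsides_eq.symm) with h | h | h | h <;> rw [h] <;> simp
end

section
/- Let OABC be a trapezoid with OA parallel to BC, whose area equals its perimeter, and let h be the distance between the parallel lines OA and BC. Then h > 2. -/
/-!
Write `C = B + t • (A - O)`. The shoelace sum then factors as `(1 - t) · cross O A B`, while
`|BC| = |t| · |OA|`; since `|1 - t| ≤ 1 + |t|`, the area is at most `h (|OA| + |BC|) / 2`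
(with equality for a genuine trapezoid). The perimeter exceeds `|OA| + |BC|` by `|AB| + |CO| > 0`,
so equability forces `h / 2 > 1`.
-/

lemma dist2_nonneg (p q : ℝ × ℝ) : 0 ≤ dist2 p q := Real.sqrt_nonneg _

lemma dist2_pos_of_ne {p q : ℝ × ℝ} (hne : p ≠ q) : 0 < dist2 p q := by
  refine Real.sqrt_pos.mpr ?_
  have hsub : p - q ≠ 0 := sub_ne_zero.mpr hne
  rcases eq_or_ne (p.1 - q.1) 0 with h1 | h1
  · have h2 : p.2 - q.2 ≠ 0 := fun h2 => hsub (Prod.ext h1 h2)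
    positivity
  · positivity

lemma dist2_add_smul_sub (O A B : ℝ × ℝ) (t : ℝ) :
    dist2 B (B + t • (A - O)) = |t| * dist2 O A := by
  have hsq : (B.1 - (B + t • (A - O)).1) ^ 2 + (B.2 - (B + t • (A - O)).2) ^ 2
      = t ^ 2 * ((O.1 - A.1) ^ 2 + (O.2 - A.2) ^ 2) := by
    simp only [Prod.fst_add, Prod.snd_add, Prod.smul_fst, Prod.smul_snd, Prod.fst_sub,
      Prod.snd_sub, smul_eq_mul]
    ring
  rw [dist2, hsq, Real.sqrt_mul (sq_nonneg t), Real.sqrt_sq_eq_abs, dist2]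

lemma ne_of_cross_ne_zero {p q r : ℝ × ℝ} (h : cross p q r ≠ 0) : p ≠ q ∧ q ≠ r := by
  constructor <;> rintro rfl <;> exact h (by unfold cross; ring)

lemma exists_smul_eq_of_cross_eq_zero {u v : ℝ × ℝ} (hu : u ≠ 0)
    (h : u.1 * v.2 - u.2 * v.1 = 0) : ∃ t : ℝ, v = t • u := by
  rcases eq_or_ne u.1 0 with h1 | h1
  · have h2 : u.2 ≠ 0 := fun h2 => hu (Prod.ext h1 h2)
    have hv1 : v.1 = 0 := by simpa [h1, h2] using h
    refine ⟨v.2 / u.2, Prod.ext ?_ ?_⟩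
    · simp [hv1, h1]
    · simp [div_mul_cancel₀ _ h2]
  · refine ⟨v.1 / u.1, Prod.ext ?_ ?_⟩
    · simp [div_mul_cancel₀ _ h1]
    · rw [Prod.smul_snd, smul_eq_mul]
      field_simp
      linarith

lemma exists_eq_add_smul_of_para {O A B C : ℝ × ℝ} (hpara : Para O A B C) (hOA : O ≠ A) :
    ∃ t : ℝ, C = B + t • (A - O) := by
  obtain ⟨t, ht⟩ := exists_smul_eq_of_cross_eq_zero (u := A - O) (v := C - B)
    (sub_ne_zero.mpr hOA.symm) hpara
  exact ⟨t, eq_add_of_sub_eq' ht⟩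

lemma shoelace_add_smul_sub (O A B : ℝ × ℝ) (t : ℝ) :
    shoelace O A B (B + t • (A - O)) = (1 - t) * cross O A B := by
  simp only [shoelace, cross, Prod.fst_add, Prod.snd_add, Prod.smul_fst, Prod.smul_snd,
    Prod.fst_sub, Prod.snd_sub, smul_eq_mul]
  ring

lemma quadArea_le_of_para {O A B C : ℝ × ℝ} (hpara : Para O A B C) (hOA : O ≠ A) :
    quadArea O A B C ≤ |cross O A B| / dist2 O A * (dist2 O A + dist2 B C) / 2 := by
  obtain ⟨t, rfl⟩ := exists_eq_add_smul_of_para hpara hOA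
  have ha : 0 < dist2 O A := dist2_pos_of_ne hOA
  have hrhs : |cross O A B| / dist2 O A * (dist2 O A + |t| * dist2 O A)
      = (1 + |t|) * |cross O A B| := by
    field_simp
  rw [quadArea, shoelace_add_smul_sub, dist2_add_smul_sub, abs_mul, hrhs]
  gcongr
  simpa using abs_sub (1 : ℝ) t

theorem equable_trapezoid_height_general (O A B C : ℝ × ℝ) (h : ℝ)
    (hquad : IsQuad O A B C)
    (hpara : Para O A B C)
    (hheight : h = |cross O A B| / dist2 O A)
    (hequable : quadArea O A B C = quadPerim O A B C) :
    2 < h := by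
  obtain ⟨⟨hOAB, -⟩, -⟩ := hquad
  obtain ⟨hOA, hAB⟩ := ne_of_cross_ne_zero hOAB
  have hparallel_sides : 0 < dist2 O A + dist2 B C :=
    add_pos_of_pos_of_nonneg (dist2_pos_of_ne hOA) (dist2_nonneg B C)
  have hperim : dist2 O A + dist2 B C < quadPerim O A B C := by
    unfold quadPerim
    linarith [dist2_pos_of_ne hAB, dist2_nonneg C O]
  have harea := quadArea_le_of_para hpara hOA
  rw [← hheight, hequable] at harea
  exact lt_of_mul_lt_mul_right (by linarith) hparallel_sides.le

/-- for an equable trapezoid, the distance between the two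
parallel sides exceeds 2. -/
theorem equable_trapezoid_height (O A B C : ℝ × ℝ) (h : ℝ)
    (hquad : IsQuad O A B C)
    (hpara : Para O A B C) (hnpara : ¬ Para A B C O)
    (hheight : h = |cross O A B| / dist2 O A)
    (hequable : quadArea O A B C = quadPerim O A B C) :
    2 < h :=
  equable_trapezoid_height_general O A B C h hquad hpara hheight hequable
end
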